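/- Suppose the h-curvature of the canonical connection Γ vanishes: 𝔘_{(ν,σ)}{δ_σ Γ^α_{μν} + Γ^η_{μν} Γ^α_{ησ}} + C^α_{μη} R^η_{νσ} = 0. Then the h-curvature of the Cartan connection Γ̊ = Γ − A satisfies R̊^α_{μνσ} = 𝔘_{(σ,ν)}{A^α_{μσ|ν} + A^η_{μν} A^α_{ησ}} + A^α_{μη} T^η_{σν} + B^α_{μη} R^η_{σν}, where | denotes h-covariant differentiation with respect to the canonical connection, T^η_{σν} := Γ^η_{σν} − Γ^η_{νσ}, B^α_{μη} := C^α_{μη} − C̊^α_{μη}, and R^η_{σν} := δ_ν N^η_σ − δ_σ N^η_ν. -/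

import Mathlib

/-- A point of TM = M × ℝⁿ, M open in ℝⁿ: a pair (x, y). -/
abbrev Pt (n : ℕ) := (Fin n → ℝ) × (Fin n → ℝ)

/-- Partial derivative in the base (x) variable along direction ν. -/
noncomputable def pdx {n : ℕ} (ν : Fin n) (f : Pt n → ℝ) (p : Pt n) : ℝ :=
  fderiv ℝ f p (Pi.single ν 1, 0)

/-- Partial derivative in the fiber (y) variable along direction α. -/
noncomputable def pdy {n : ℕ} (α : Fin n) (f : Pt n → ℝ) (p : Pt n) : ℝ :=
  fderiv ℝ f p (0, Pi.single α 1)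

/-- Horizontal derivative δ_ν := ∂_ν − N^α_ν ∂̇_α for a nonlinear connection N. -/
noncomputable def hd {n : ℕ} (N : Pt n → Fin n → Fin n → ℝ) (ν : Fin n)
    (f : Pt n → ℝ) (p : Pt n) : ℝ :=
  pdx ν f p - ∑ α, N p α ν * pdy α f p

lemma hd_sub {n : ℕ} (N : Pt n → Fin n → Fin n → ℝ) (ν : Fin n)
    (f g : Pt n → ℝ) (hf : ContDiff ℝ (⊤ : ℕ∞) f) (hg : ContDiff ℝ (⊤ : ℕ∞) g) (p : Pt n) :
    hd N ν (fun q => f q - g q) p = hd N ν f p - hd N ν g p := by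
  have hf' := hf.differentiable (by simp) |>.differentiableAt (x := p)
  have hg' := hg.differentiable (by simp) |>.differentiableAt (x := p)
  simp only [hd, pdx, pdy, fderiv_fun_sub hf' hg', ContinuousLinearMap.sub_apply,
    mul_sub, Finset.sum_sub_distrib]
  ring

/-- If the h-curvature of the canonical connection (Γ, N, C) vanishes,
then the h-curvature of the Cartan connection Γ̊ = Γ − A, C̊ = C − B satisfies
R̊^α_{μνσ} = 𝔘_{(σ,ν)}{A^α_{μσ|ν} + A^η_{μν} A^α_{ησ}} + A^α_{μη} T^η_{σν} + B^α_{μη} R^η_{σν}. -/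
theorem stmt_12 {n : ℕ} (Γ C A B : Pt n → Fin n → Fin n → Fin n → ℝ)
    (N : Pt n → Fin n → Fin n → ℝ)
    (hsmΓ : ∀ α μ ν, ContDiff ℝ (⊤ : ℕ∞) fun p => Γ p α μ ν)
    (hsmC : ∀ α μ ν, ContDiff ℝ (⊤ : ℕ∞) fun p => C p α μ ν)
    (hsmA : ∀ α μ ν, ContDiff ℝ (⊤ : ℕ∞) fun p => A p α μ ν)
    (hsmB : ∀ α μ ν, ContDiff ℝ (⊤ : ℕ∞) fun p => B p α μ ν)
    (hsmN : ∀ α ν, ContDiff ℝ (⊤ : ℕ∞) fun p => N p α ν) :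
    let T := fun (p : Pt n) (α μ ν : Fin n) => Γ p α μ ν - Γ p α ν μ
    let R := fun (p : Pt n) (α μ ν : Fin n) =>
      hd N ν (fun q => N q α μ) p - hd N μ (fun q => N q α ν) p
    -- h-covariant derivative A^α_{μσ|ν} with respect to the canonical connection
    let covA := fun (p : Pt n) (α μ σ ν : Fin n) =>
      hd N ν (fun q => A q α μ σ) p + ∑ η, A p η μ σ * Γ p α η ν
        - ∑ η, A p α η σ * Γ p η μ ν - ∑ η, A p α μ η * Γ p η σ ν
    -- hypothesis: the h-curvature of the canonical connection vanishes
    (∀ p (α μ ν σ : Fin n),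
        (hd N σ (fun q => Γ q α μ ν) p + ∑ η, Γ p η μ ν * Γ p α η σ)
          - (hd N ν (fun q => Γ q α μ σ) p + ∑ η, Γ p η μ σ * Γ p α η ν)
          + ∑ η, C p α μ η * R p η ν σ = 0) →
    -- conclusion: formula for the h-curvature of the Cartan connection Γ̊ = Γ − A, C̊ = C − B
    ∀ p (α μ ν σ : Fin n),
      (hd N σ (fun q => Γ q α μ ν - A q α μ ν) p
          + ∑ η, (Γ p η μ ν - A p η μ ν) * (Γ p α η σ - A p α η σ))
        - (hd N ν (fun q => Γ q α μ σ - A q α μ σ) p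
          + ∑ η, (Γ p η μ σ - A p η μ σ) * (Γ p α η ν - A p α η ν))
        + ∑ η, (C p α μ η - B p α μ η) * R p η ν σ
      = (covA p α μ σ ν + ∑ η, A p η μ ν * A p α η σ)
          - (covA p α μ ν σ + ∑ η, A p η μ σ * A p α η ν)
        + ∑ η, A p α μ η * T p η σ ν + ∑ η, B p α μ η * R p η σ ν := by
  intro T R covA hcurv p α μ ν σ
  have h := hcurv p α μ ν σ
  rw [hd_sub N σ _ _ (hsmΓ α μ ν) (hsmA α μ ν), hd_sub N ν _ _ (hsmΓ α μ σ) (hsmA α μ σ)]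
  simp only [T, R, covA] at h ⊢
  have e1 : ∑ η, A p α η σ * Γ p η μ ν = ∑ η, Γ p η μ ν * A p α η σ :=
    Finset.sum_congr rfl fun _ _ => mul_comm _ _
  have e2 : ∑ η, A p α η ν * Γ p η μ σ = ∑ η, Γ p η μ σ * A p α η ν :=
    Finset.sum_congr rfl fun _ _ => mul_comm _ _
  simp only [sub_mul, mul_sub, Finset.sum_sub_distrib] at h ⊢
  linarith [h, e1, e2]
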